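/- Let X be a metric space and Γ a group acting on X by homeomorphisms. The induced action of Γ on the space K(X) of nonempty compact subsets of X (with the Hausdorff metric) is properly discontinuous if and only if the action of Γ on X is properly discontinuous. -/
import Mathlib


open TopologicalSpace Metric Set

/-- The union of a compact family of nonempty compact sets is compact. -/
lemma isCompact_biUnion_of_isCompact_hyperspace {X : Type*} [MetricSpace X]
    {𝒞 : Set (NonemptyCompacts X)} (h𝒞 : IsCompact 𝒞) :
    IsCompact (⋃ A ∈ 𝒞, (A : Set X)) := by
  refine isCompact_of_finite_subcover ?_
  intro ι U hU hcov
  -- For each A ∈ 𝒞, choose a finite subcover and a thickening radius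
  have key : ∀ A ∈ 𝒞, ∃ ε > 0, ∃ t : Finset ι,
      thickening ε (A : Set X) ⊆ ⋃ i ∈ t, U i := by
    intro A hA
    have hAsub : (A : Set X) ⊆ ⋃ i, U i := by
      refine Subset.trans ?_ hcov
      exact subset_biUnion_of_mem (u := fun A : NonemptyCompacts X => (A : Set X)) hA
    obtain ⟨t, ht⟩ := A.isCompact.elim_finite_subcover U hU hAsub
    obtain ⟨ε, hε, hthick⟩ := A.isCompact.exists_thickening_subset_open
      (isOpen_biUnion fun i _ => hU i) ht
    exact ⟨ε, hε, t, hthick⟩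
  choose! ε hε t ht using key
  -- cover 𝒞 by balls
  have hball : 𝒞 ⊆ ⋃ A ∈ 𝒞, ball A (ε A) := fun A hA =>
    mem_biUnion hA (mem_ball_self (hε A hA))
  obtain ⟨s, hs𝒞, hsfin, hscov⟩ :=
    h𝒞.elim_finite_subcover_image (fun A _ => isOpen_ball) hball
  classical
  refine ⟨hsfin.toFinset.biUnion t, ?_⟩
  intro x hx
  simp only [mem_iUnion] at hx
  obtain ⟨A, hA, hxA⟩ := hx
  obtain ⟨B, hB, hAB⟩ := by
    have := hscov hA
    simpa only [mem_iUnion] using this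
  -- x ∈ A, dist A B < ε B, so x ∈ thickening (ε B) B
  have hfin : EMetric.hausdorffEdist (A : Set X) (B : Set X) ≠ ⊤ :=
    hausdorffEdist_ne_top_of_nonempty_of_bounded A.nonempty B.nonempty
      A.isCompact.isBounded B.isCompact.isBounded
  have hxB : x ∈ thickening (ε B) (B : Set X) := by
    rw [mem_thickening_iff_infDist_lt B.nonempty]
    calc infDist x (B : Set X) ≤ hausdorffDist (A : Set X) (B : Set X) :=
          infDist_le_hausdorffDist_of_mem hxA hfin
      _ < ε B := hAB
  have := ht B (hs𝒞 hB) hxB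
  simp only [mem_iUnion] at this ⊢
  obtain ⟨i, hi, hxU⟩ := this
  exact ⟨i, by
    simp only [Finset.mem_biUnion, Set.Finite.mem_toFinset]
    exact ⟨B, hB, hi⟩, hxU⟩

theorem properly_discontinuous_iff_on_hyperspace
    {X : Type*} [MetricSpace X] {Γ : Type*} [Group Γ] [MulAction Γ X]
    (hcont : ∀ γ : Γ, Continuous (fun x : X => γ • x)) :
    (∀ 𝒞 : Set (NonemptyCompacts X), IsCompact 𝒞 →
        {γ : Γ | ∃ A ∈ 𝒞, ∃ B ∈ 𝒞,
          (fun x : X => γ • x) '' (A : Set X) = (B : Set X)}.Finite)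
    ↔ (∀ C : Set X, IsCompact C → {γ : Γ | ∃ x ∈ C, γ • x ∈ C}.Finite) := by
  constructor
  · intro h C hC
    rcases C.eq_empty_or_nonempty with rfl | hne
    · simpa using Set.finite_empty
    -- singleton map
    set S : X → NonemptyCompacts X := fun x =>
      ⟨⟨{x}, isCompact_singleton⟩, singleton_nonempty x⟩ with hS
    have hScont : Continuous S := by
      refine LipschitzWith.continuous (K := 1) (LipschitzWith.of_dist_le_mul fun x y => ?_)
      have : dist (S x) (S y) = hausdorffDist ({x} : Set X) ({y} : Set X) := rfl
      rw [this, NNReal.coe_one, one_mul]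
      exact hausdorffDist_le_of_mem_dist dist_nonneg
        (fun a ha => ⟨y, rfl, by simp_all⟩)
        (fun a ha => ⟨x, rfl, by simp_all [dist_comm]⟩)
    have h𝒞 : IsCompact (S '' C) := hC.image hScont
    refine (h (S '' C) h𝒞).subset fun γ ⟨x, hx, hgx⟩ => ?_
    refine ⟨S x, mem_image_of_mem S hx, S (γ • x), mem_image_of_mem S hgx, ?_⟩
    simp [hS, Set.image_singleton]
  · intro h 𝒞 h𝒞
    have hC := isCompact_biUnion_of_isCompact_hyperspace h𝒞
    refine (h _ hC).subset fun γ ⟨A, hA, B, hB, hAB⟩ => ?_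
    obtain ⟨x, hx⟩ := A.nonempty
    refine ⟨x, mem_biUnion hA hx, ?_⟩
    have : γ • x ∈ (B : Set X) := hAB ▸ mem_image_of_mem _ hx
    exact mem_biUnion hB this
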